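/- Let X be a weakly normal gts with X_top locally compact Hausdorff and non-compact. Then the collection C₀ = {A ∈ Cl_X : A is topologically compact, or every B ∈ Cl_X with B ⊆ X ∖ A is topologically compact} is a Wallman base for X_top, and every filter in C₀ extends to an ultrafilter in C₀ (so the Wallman space W(X, C₀) is compact), all in ZF. -/

import Mathlib

/-!
Compact sets, and closed sets all of whose closed subsets of the complement are compact, are
both stable under finite unions. Weak normality makes `C₀` stable under intersections: if
`A, B ∈ C₀` are of the second kind and `D ⊆ (A ∩ B)ᶜ` is closed, separate `A` from `D ∩ B` by
disjoint opens `W₁, W₂`; then `D = (D \ W₁) ∪ (D \ W₂)` with `D \ W₁ ⊆ Aᶜ` and `D \ W₂ ⊆ Bᶜ`,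
both compact. Local compactness puts every compact subset of an open set inside a basic open `V`
contained in a compact set, so that `Vᶜ ∈ C₀`; this makes `C₀` a closed base, and together with
weak normality it gives disjunctivity and screening. Ultrafilters in `C₀` exist by Zorn's lemma,
and the Wallman space is compact because an ultrafilter on it traces a filter in `C₀` whose
maximal extension is a limit point.
-/

open Set TopologicalSpace Topology

universe u

/-- A generalized topology in the sense of Delfs–Knebusch (axioms following
Piękosz, Definition 2.2.1): `Cov` is the collection of admissible open families,
and the open sets are the members of `⋃₀ Cov`. -/
structure GenTop (X : Type u) : Type u where
  Cov : Set (Set (Set X))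
  univ_open : Set.univ ∈ ⋃₀ Cov
  finite_admissible : ∀ 𝒰 : Set (Set X), 𝒰.Finite → 𝒰 ⊆ ⋃₀ Cov → 𝒰 ∈ Cov
  union_open : ∀ 𝒰 ∈ Cov, ⋃₀ 𝒰 ∈ ⋃₀ Cov
  restrict : ∀ 𝒰 ∈ Cov, ∀ V ∈ ⋃₀ Cov, (fun U => V ∩ U) '' 𝒰 ∈ Cov
  transitive : ∀ 𝒰 ∈ Cov, ∀ f : Set X → Set (Set X),
    (∀ U ∈ 𝒰, f U ∈ Cov ∧ ⋃₀ f U = U) → {V : Set X | ∃ U ∈ 𝒰, V ∈ f U} ∈ Cov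
  coarsen : ∀ 𝒰 ∈ Cov, ∀ 𝒱 ⊆ ⋃₀ Cov, (∀ U ∈ 𝒰, ∃ V ∈ 𝒱, U ⊆ V) →
    ⋃₀ 𝒱 = ⋃₀ 𝒰 → 𝒱 ∈ Cov
  regular : ∀ 𝒰 ∈ Cov, ∀ W ⊆ ⋃₀ 𝒰, (∀ U ∈ 𝒰, W ∩ U ∈ ⋃₀ Cov) → W ∈ ⋃₀ Cov

namespace GenTop

variable {X : Type u} (G : GenTop X)

/-- The open sets of a gts. -/
def Opens : Set (Set X) := ⋃₀ G.Cov

/-- The closed sets of a gts. -/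
def Closeds : Set (Set X) := {A : Set X | Aᶜ ∈ G.Opens}

/-- The topologization of a gts: the topology generated by the open sets. -/
def topol : TopologicalSpace X := TopologicalSpace.generateFrom G.Opens

/-- A gts is weakly normal if disjoint sets, each a singleton or closed,
can be separated by disjoint open sets. -/
def WeaklyNormal : Prop :=
  ∀ A₁ A₂ : Set X, ((∃ x, A₁ = {x}) ∨ A₁ ∈ G.Closeds) →
    ((∃ x, A₂ = {x}) ∨ A₂ ∈ G.Closeds) → Disjoint A₁ A₂ →
    ∃ W₁ ∈ G.Opens, ∃ W₂ ∈ G.Opens, Disjoint W₁ W₂ ∧ A₁ ⊆ W₁ ∧ A₂ ⊆ W₂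

end GenTop

/-- A closed base of a topological space. -/
def IsClosedBase {X : Type u} [TopologicalSpace X] (C : Set (Set X)) : Prop :=
  (∀ A ∈ C, IsClosed A) ∧
  ∀ A : Set X, IsClosed A → ∀ x ∉ A, ∃ B ∈ C, x ∉ B ∧ A ⊆ B

/-- A complete closed base: a closed base containing `∅` and `univ`, closed
under finite unions and finite intersections. -/
def IsCompleteClosedBase {X : Type u} [TopologicalSpace X] (C : Set (Set X)) : Prop :=
  IsClosedBase C ∧ ∅ ∈ C ∧ Set.univ ∈ C ∧
  (∀ A ∈ C, ∀ B ∈ C, A ∪ B ∈ C) ∧ (∀ A ∈ C, ∀ B ∈ C, A ∩ B ∈ C)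

/-- A Wallman base of a topological space. -/
def IsWallmanBase {X : Type u} [TopologicalSpace X] (C : Set (Set X)) : Prop :=
  IsClosedBase C ∧
  (∀ A ∈ C, ∀ B ∈ C, A ∪ B ∈ C) ∧ (∀ A ∈ C, ∀ B ∈ C, A ∩ B ∈ C) ∧
  (∀ A : Set X, ((∃ x, A = {x}) ∨ IsClosed A) → ∀ x ∉ A, ∃ B ∈ C, x ∈ B ∧ B ⊆ Aᶜ) ∧
  (∀ A₁ ∈ C, ∀ A₂ ∈ C, Disjoint A₁ A₂ →
    ∃ C₁ ∈ C, ∃ C₂ ∈ C, C₁ ∪ C₂ = Set.univ ∧ A₁ ∩ C₁ = ∅ ∧ A₂ ∩ C₂ = ∅)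

/-- A filter in the lattice `C`: a nonempty collection of nonempty members of `C`,
closed under finite intersections and upward closed within `C`. -/
def IsCFilter {X : Type u} (C : Set (Set X)) (F : Set (Set X)) : Prop :=
  F ⊆ C ∧ F.Nonempty ∧ (∀ A ∈ F, A.Nonempty) ∧
  (∀ A ∈ F, ∀ B ∈ F, A ∩ B ∈ F) ∧ (∀ A ∈ F, ∀ B ∈ C, A ⊆ B → B ∈ F)

/-- An ultrafilter in the lattice `C`: a maximal filter in `C`. -/
def IsCUltrafilter {X : Type u} (C : Set (Set X)) (F : Set (Set X)) : Prop :=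
  IsCFilter C F ∧ ∀ F' : Set (Set X), IsCFilter C F' → F ⊆ F' → F' = F

/-- The points of the Wallman space: ultrafilters in `C`. -/
def WallmanPoint {X : Type u} (C : Set (Set X)) : Type u :=
  {p : Set (Set X) // IsCUltrafilter C p}

/-- The topology of the Wallman space, with closed base `{[A] : A ∈ C}` where
`[A] = {p : A ∈ p}`. -/
def wallmanTop {X : Type u} (C : Set (Set X)) : TopologicalSpace (WallmanPoint C) :=
  TopologicalSpace.generateFrom
    {V : Set (WallmanPoint C) | ∃ A ∈ C, V = {p : WallmanPoint C | A ∈ p.1}ᶜ}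

/-- The Wallman base of the one-point compactification: closed sets that are
topologically compact or whose closed "complementary" sets are all compact. -/
def C0 {X : Type u} (G : GenTop X) : Set (Set X) :=
  {A ∈ G.Closeds | @IsCompact X G.topol A ∨
    ∀ B ∈ G.Closeds, B ⊆ Aᶜ → @IsCompact X G.topol B}

namespace GenTop

variable {X : Type u} (G : GenTop X)

theorem sUnion_mem_opens_of_finite {𝒰 : Set (Set X)} (h : 𝒰.Finite) (hs : 𝒰 ⊆ G.Opens) :
    ⋃₀ 𝒰 ∈ G.Opens :=
  G.union_open 𝒰 (G.finite_admissible 𝒰 h hs)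

theorem empty_mem_opens : ∅ ∈ G.Opens := by
  simpa using G.sUnion_mem_opens_of_finite finite_empty (empty_subset _)

theorem union_mem_opens {U V : Set X} (hU : U ∈ G.Opens) (hV : V ∈ G.Opens) :
    U ∪ V ∈ G.Opens := by
  simpa using G.sUnion_mem_opens_of_finite (toFinite {U, V}) (pair_subset hU hV)

theorem inter_mem_opens {U V : Set X} (hU : U ∈ G.Opens) (hV : V ∈ G.Opens) :
    U ∩ V ∈ G.Opens := by
  have hcov : {V} ∈ G.Cov :=
    G.finite_admissible {V} (finite_singleton V) (singleton_subset_iff.2 hV)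
  simpa [Opens] using G.union_open _ (G.restrict {V} hcov U hU)

theorem sInter_mem_opens_of_finite {𝒰 : Set (Set X)} (h : 𝒰.Finite) (hs : 𝒰 ⊆ G.Opens) :
    ⋂₀ 𝒰 ∈ G.Opens := by
  induction 𝒰, h using Set.Finite.induction_on with
  | empty => rw [sInter_empty]; exact G.univ_open
  | @insert U 𝒰 _ _ ih =>
    rw [sInter_insert]
    exact G.inter_mem_opens (hs (mem_insert _ _)) (ih ((subset_insert _ _).trans hs))

theorem compl_mem_closeds {U : Set X} (hU : U ∈ G.Opens) : Uᶜ ∈ G.Closeds := by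
  show Uᶜᶜ ∈ G.Opens
  rwa [compl_compl]

theorem inter_mem_closeds {A B : Set X} (hA : A ∈ G.Closeds) (hB : B ∈ G.Closeds) :
    A ∩ B ∈ G.Closeds := by
  show (A ∩ B)ᶜ ∈ G.Opens
  rw [compl_inter]
  exact G.union_mem_opens hA hB

theorem union_mem_closeds {A B : Set X} (hA : A ∈ G.Closeds) (hB : B ∈ G.Closeds) :
    A ∪ B ∈ G.Closeds := by
  show (A ∪ B)ᶜ ∈ G.Opens
  rw [compl_union]
  exact G.inter_mem_opens hA hB

theorem isOpen_of_mem_opens {U : Set X} (hU : U ∈ G.Opens) : @IsOpen X G.topol U :=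
  isOpen_generateFrom_of_mem hU

theorem isClosed_of_mem_closeds {A : Set X} (hA : A ∈ G.Closeds) : @IsClosed X G.topol A := by
  let := G.topol
  exact isOpen_compl_iff.1 (G.isOpen_of_mem_opens hA)

theorem exists_mem_opens_subset {U : Set X} (hU : @IsOpen X G.topol U) {x : X} (hx : x ∈ U) :
    ∃ V ∈ G.Opens, x ∈ V ∧ V ⊆ U := by
  let := G.topol
  obtain ⟨_, ⟨𝒰, ⟨h𝒰, h𝒰G⟩, rfl⟩, hx𝒰, h𝒰U⟩ :=
    (isTopologicalBasis_of_subbasis rfl).exists_subset_of_mem_open hx hU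
  exact ⟨⋂₀ 𝒰, G.sInter_mem_opens_of_finite h𝒰 h𝒰G, hx𝒰, h𝒰U⟩

theorem exists_mem_opens_between {A U : Set X} (hA : @IsCompact X G.topol A)
    (hU : @IsOpen X G.topol U) (hAU : A ⊆ U) : ∃ V ∈ G.Opens, A ⊆ V ∧ V ⊆ U := by
  let := G.topol
  choose V hV hxV hVU using fun x (hx : x ∈ A) => G.exists_mem_opens_subset hU (hAU hx)
  obtain ⟨t, hAt⟩ := hA.elim_nhds_subcover' V fun x hx =>
    (G.isOpen_of_mem_opens (hV x hx)).mem_nhds (hxV x hx)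
  refine ⟨⋃ x ∈ t, V x x.2, ?_, hAt, iUnion₂_subset fun x _ => hVU x x.2⟩
  rw [← Finset.set_biUnion_coe, ← sUnion_image]
  exact G.sUnion_mem_opens_of_finite (t.finite_toSet.image _)
    (image_subset_iff.2 fun x _ => hV x x.2)

theorem exists_mem_opens_isCompact_between [@LocallyCompactSpace X G.topol] {A U : Set X}
    (hA : @IsCompact X G.topol A) (hU : @IsOpen X G.topol U) (hAU : A ⊆ U) :
    ∃ V ∈ G.Opens, ∃ K, @IsCompact X G.topol K ∧ A ⊆ V ∧ V ⊆ K ∧ K ⊆ U := by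
  let := G.topol
  obtain ⟨K, hK, hAK, hKU⟩ := exists_compact_between hA hU hAU
  obtain ⟨V, hV, hAV, hVK⟩ := G.exists_mem_opens_between hA isOpen_interior hAK
  exact ⟨V, hV, K, hK, hAV, hVK.trans interior_subset, hKU⟩

theorem WeaklyNormal.t2Space {G : GenTop X} (hwn : G.WeaklyNormal) : @T2Space X G.topol := by
  let := G.topol
  refine ⟨fun x y hxy => ?_⟩
  obtain ⟨U, hU, V, hV, hUV, hxU, hyV⟩ :=
    hwn {x} {y} (.inl ⟨x, rfl⟩) (.inl ⟨y, rfl⟩) (disjoint_singleton.2 hxy)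
  exact ⟨U, V, G.isOpen_of_mem_opens hU, G.isOpen_of_mem_opens hV,
    singleton_subset_iff.1 hxU, singleton_subset_iff.1 hyV, hUV⟩

theorem compl_mem_C0_of_subset_isCompact {V K : Set X} (hV : V ∈ G.Opens)
    (hK : @IsCompact X G.topol K) (hVK : V ⊆ K) : Vᶜ ∈ C0 G := by
  let := G.topol
  refine ⟨G.compl_mem_closeds hV, .inr fun B hB hBV => ?_⟩
  rw [compl_compl] at hBV
  exact hK.of_isClosed_subset (G.isClosed_of_mem_closeds hB) (hBV.trans hVK)

theorem univ_mem_C0 : univ ∈ C0 G := by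
  let := G.topol
  simpa using G.compl_mem_C0_of_subset_isCompact G.empty_mem_opens isCompact_empty subset_rfl

theorem union_mem_C0 {A B : Set X} (hA : A ∈ C0 G) (hB : B ∈ C0 G) : A ∪ B ∈ C0 G := by
  let := G.topol
  refine ⟨G.union_mem_closeds hA.1 hB.1, ?_⟩
  rcases hA.2 with hAc | hA'
  · rcases hB.2 with hBc | hB'
    · exact .inl (hAc.union hBc)
    · exact .inr fun D hD hDAB => hB' D hD (hDAB.trans (compl_subset_compl.2 subset_union_right))
  · exact .inr fun D hD hDAB => hA' D hD (hDAB.trans (compl_subset_compl.2 subset_union_left))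

theorem inter_mem_C0 (hwn : G.WeaklyNormal) {A B : Set X} (hA : A ∈ C0 G) (hB : B ∈ C0 G) :
    A ∩ B ∈ C0 G := by
  let := G.topol
  have hAB := G.inter_mem_closeds hA.1 hB.1
  refine ⟨hAB, ?_⟩
  rcases hA.2 with hAc | hA'
  · exact .inl (hAc.of_isClosed_subset (G.isClosed_of_mem_closeds hAB) inter_subset_left)
  rcases hB.2 with hBc | hB'
  · exact .inl (hBc.of_isClosed_subset (G.isClosed_of_mem_closeds hAB) inter_subset_right)
  refine .inr fun D hD hDAB => ?_
  obtain ⟨W₁, hW₁, W₂, hW₂, hW, hAW, hDBW⟩ := hwn A (D ∩ B) (.inr hA.1)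
    (.inr (G.inter_mem_closeds hD hB.1))
    (disjoint_left.2 fun x hxA hx => hDAB hx.1 ⟨hxA, hx.2⟩)
  have h₁ : IsCompact (D ∩ W₁ᶜ) :=
    hA' _ (G.inter_mem_closeds hD (G.compl_mem_closeds hW₁)) fun x hx hxA => hx.2 (hAW hxA)
  have h₂ : IsCompact (D ∩ W₂ᶜ) :=
    hB' _ (G.inter_mem_closeds hD (G.compl_mem_closeds hW₂)) fun x hx hxB =>
      hx.2 (hDBW ⟨hx.1, hxB⟩)
  have hD_eq : D = (D ∩ W₁ᶜ) ∪ (D ∩ W₂ᶜ) := by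
    rw [← inter_union_distrib_left, ← compl_inter, hW.inter_eq, compl_empty, inter_univ]
  rw [hD_eq]
  exact h₁.union h₂

section LocallyCompact

variable [@LocallyCompactSpace X G.topol]

theorem isClosedBase_C0 : @IsClosedBase X G.topol (C0 G) := by
  let := G.topol
  refine ⟨fun A hA => G.isClosed_of_mem_closeds hA.1, fun A hA x hx => ?_⟩
  obtain ⟨V, hV, K, hK, hxV, hVK, hKA⟩ := G.exists_mem_opens_isCompact_between
    isCompact_singleton hA.isOpen_compl (singleton_subset_iff.2 hx)
  exact ⟨Vᶜ, G.compl_mem_C0_of_subset_isCompact hV hK hVK, fun h => h (hxV rfl),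
    subset_compl_comm.2 (hVK.trans hKA)⟩

theorem exists_mem_C0_mem_subset_compl (hwn : G.WeaklyNormal) {A : Set X}
    (hA : @IsClosed X G.topol A) {x : X} (hx : x ∉ A) : ∃ B ∈ C0 G, x ∈ B ∧ B ⊆ Aᶜ := by
  let := G.topol
  obtain ⟨V, hV, K, hK, hxV, hVK, hKA⟩ := G.exists_mem_opens_isCompact_between
    isCompact_singleton hA.isOpen_compl (singleton_subset_iff.2 hx)
  obtain ⟨W₁, -, W₂, hW₂, hW, hxW, hVW⟩ := hwn {x} Vᶜ (.inl ⟨x, rfl⟩)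
    (.inr (G.compl_mem_closeds hV)) (disjoint_singleton_left.2 fun h => h (hxV rfl))
  have hWV : W₂ᶜ ⊆ V := compl_subset_comm.1 hVW
  have hWc := G.compl_mem_closeds hW₂
  exact ⟨W₂ᶜ, ⟨hWc, .inl (hK.of_isClosed_subset (G.isClosed_of_mem_closeds hWc) (hWV.trans hVK))⟩,
    disjoint_left.1 hW (hxW rfl), hWV.trans (hVK.trans hKA)⟩

theorem exists_mem_opens_compl_mem_C0_between {A V : Set X} (hA : A ∈ C0 G)
    (hV : V ∈ G.Opens) (hAV : A ⊆ V) : ∃ W ∈ G.Opens, A ⊆ W ∧ W ⊆ V ∧ Wᶜ ∈ C0 G := by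
  rcases hA.2 with hAc | hA'
  · obtain ⟨W, hW, K, hK, hAW, hWK, hKV⟩ :=
      G.exists_mem_opens_isCompact_between hAc (G.isOpen_of_mem_opens hV) hAV
    exact ⟨W, hW, hAW, hWK.trans hKV, G.compl_mem_C0_of_subset_isCompact hW hK hWK⟩
  · exact ⟨V, hV, hAV, subset_rfl, G.compl_mem_closeds hV,
      .inl (hA' _ (G.compl_mem_closeds hV) (compl_subset_compl.2 hAV))⟩

theorem exists_C0_screening (hwn : G.WeaklyNormal) {A₁ A₂ : Set X} (h₁ : A₁ ∈ C0 G)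
    (h₂ : A₂ ∈ C0 G) (hd : Disjoint A₁ A₂) :
    ∃ C₁ ∈ C0 G, ∃ C₂ ∈ C0 G, C₁ ∪ C₂ = univ ∧ A₁ ∩ C₁ = ∅ ∧ A₂ ∩ C₂ = ∅ := by
  obtain ⟨V₁, hV₁, V₂, hV₂, hV, hAV₁, hAV₂⟩ := hwn A₁ A₂ (.inr h₁.1) (.inr h₂.1) hd
  obtain ⟨W₁, -, hAW₁, hWV₁, hC₁⟩ := G.exists_mem_opens_compl_mem_C0_between h₁ hV₁ hAV₁
  obtain ⟨W₂, -, hAW₂, hWV₂, hC₂⟩ := G.exists_mem_opens_compl_mem_C0_between h₂ hV₂ hAV₂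
  refine ⟨W₁ᶜ, hC₁, W₂ᶜ, hC₂, ?_, sdiff_eq_empty.2 hAW₁, sdiff_eq_empty.2 hAW₂⟩
  rw [← compl_inter, (hV.mono hWV₁ hWV₂).inter_eq, compl_empty]

theorem isWallmanBase_C0 (hwn : G.WeaklyNormal) : @IsWallmanBase X G.topol (C0 G) := by
  let := G.topol
  have := hwn.t2Space
  refine ⟨G.isClosedBase_C0, fun _ hA _ hB => G.union_mem_C0 hA hB,
    fun _ hA _ hB => G.inter_mem_C0 hwn hA hB, fun A hA x hx => ?_,
    fun _ h₁ _ h₂ hd => G.exists_C0_screening hwn h₁ h₂ hd⟩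
  obtain ⟨y, rfl⟩ | hA := hA
  exacts [G.exists_mem_C0_mem_subset_compl hwn isClosed_singleton hx,
    G.exists_mem_C0_mem_subset_compl hwn hA hx]

end LocallyCompact

end GenTop

section Wallman

variable {X : Type u} {C : Set (Set X)}

theorem IsCFilter.univ_mem {F : Set (Set X)} (hF : IsCFilter C F) (hC : univ ∈ C) : univ ∈ F :=
  let ⟨A, hA⟩ := hF.2.1
  hF.2.2.2.2 A hA univ hC (subset_univ A)

theorem isCFilter_sUnion_of_isChain {c : Set (Set (Set X))} (hc : ∀ F ∈ c, IsCFilter C F)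
    (hchain : IsChain (· ⊆ ·) c) (hne : c.Nonempty) : IsCFilter C (⋃₀ c) := by
  obtain ⟨F₀, hF₀⟩ := hne
  refine ⟨sUnion_subset fun F hF => (hc F hF).1, ?_, ?_, ?_, ?_⟩
  · obtain ⟨A, hA⟩ := (hc F₀ hF₀).2.1
    exact ⟨A, F₀, hF₀, hA⟩
  · rintro A ⟨F, hF, hA⟩
    exact (hc F hF).2.2.1 A hA
  · rintro A ⟨F₁, hF₁, hA⟩ B ⟨F₂, hF₂, hB⟩
    rcases hchain.total hF₁ hF₂ with h | h
    · exact ⟨F₂, hF₂, (hc F₂ hF₂).2.2.2.1 A (h hA) B hB⟩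
    · exact ⟨F₁, hF₁, (hc F₁ hF₁).2.2.2.1 A hA B (h hB)⟩
  · rintro A ⟨F, hF, hA⟩ B hB hAB
    exact ⟨F, hF, (hc F hF).2.2.2.2 A hA B hB hAB⟩

theorem IsCFilter.exists_isCUltrafilter_superset {F : Set (Set X)} (hF : IsCFilter C F) :
    ∃ M, IsCUltrafilter C M ∧ F ⊆ M := by
  obtain ⟨M, hFM, hM⟩ := zorn_subset_nonempty {F' | IsCFilter C F' ∧ F ⊆ F'}
    (fun c hc hchain hne => ⟨⋃₀ c,
      ⟨isCFilter_sUnion_of_isChain (fun F' hF' => (hc hF').1) hchain hne,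
        (hc hne.some_mem).2.trans (subset_sUnion_of_mem hne.some_mem)⟩,
      fun _ => subset_sUnion_of_mem⟩)
    F ⟨hF, subset_rfl⟩
  exact ⟨M, ⟨hM.1.1, fun F' hF' hMF' => (hM.2 ⟨hF', hFM.trans hMF'⟩ hMF').antisymm hMF'⟩, hFM⟩

variable (hC : univ ∈ C) (hinter : ∀ A ∈ C, ∀ B ∈ C, A ∩ B ∈ C)
include hC hinter

theorem isCFilter_of_ultrafilter_wallmanPoint (f : Ultrafilter (WallmanPoint C)) :
    IsCFilter C {A ∈ C | {p : WallmanPoint C | A ∈ p.1} ∈ f} := by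
  refine ⟨fun A hA => hA.1, ⟨univ, hC, ?_⟩, fun A hA => ?_, fun A hA B hB => ?_,
    fun A hA B hB hAB => ?_⟩
  · simp only [fun p : WallmanPoint C => p.2.1.univ_mem hC, ofPred_true]
    exact Filter.univ_mem
  · obtain ⟨p, hp⟩ := Ultrafilter.nonempty_of_mem hA.2
    exact p.2.1.2.2.1 A hp
  · exact ⟨hinter A hA.1 B hB.1, Filter.mem_of_superset (Filter.inter_mem hA.2 hB.2)
      fun p hp => p.2.1.2.2.2.1 A hp.1 B hp.2⟩
  · exact ⟨hB, Filter.mem_of_superset hA.2 fun p hp => p.2.1.2.2.2.2 A hp B hB hAB⟩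

theorem compactSpace_wallmanTop : @CompactSpace (WallmanPoint C) (wallmanTop C) := by
  let := wallmanTop C
  refine ⟨isCompact_iff_ultrafilter_le_nhds.2 fun f _ => ?_⟩
  obtain ⟨M, hM, hfM⟩ :=
    (isCFilter_of_ultrafilter_wallmanPoint hC hinter f).exists_isCUltrafilter_superset
  refine ⟨(⟨M, hM⟩ : WallmanPoint C), mem_univ _, le_of_le_of_eq ?_ nhds_generateFrom.symm⟩
  refine le_iInf₂ fun s ⟨hMs, A, hA, hs⟩ => Filter.le_principal_iff.2 ?_
  subst hs
  by_contra hsf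
  exact hMs (hfM ⟨hA, by simpa using Ultrafilter.compl_mem_iff_notMem.2 hsf⟩)

end Wallman

theorem stmt_17_general {X : Type u} (G : GenTop X) (hwn : G.WeaklyNormal)
    (hlc : @LocallyCompactSpace X G.topol) :
    @IsWallmanBase X G.topol (C0 G) ∧
    (∀ F : Set (Set X), IsCFilter (C0 G) F →
      ∃ M : Set (Set X), IsCUltrafilter (C0 G) M ∧ F ⊆ M) ∧
    @CompactSpace (WallmanPoint (C0 G)) (wallmanTop (C0 G)) :=
  ⟨G.isWallmanBase_C0 hwn, fun _ hF => hF.exists_isCUltrafilter_superset,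
    compactSpace_wallmanTop G.univ_mem_C0 fun _ hA _ hB => G.inter_mem_C0 hwn hA hB⟩

/-- For a weakly normal gts with locally compact Hausdorff non-compact
topologization: `C₀` is a Wallman base of `X_top`, every filter in `C₀` extends
to an ultrafilter in `C₀`, and the Wallman space `W(X, C₀)` is compact. -/
theorem stmt_17 {X : Type u} (G : GenTop X) (hwn : G.WeaklyNormal)
    (hlc : @LocallyCompactSpace X G.topol) (h2 : @T2Space X G.topol)
    (hnc : ¬ @CompactSpace X G.topol) :
    @IsWallmanBase X G.topol (C0 G) ∧
    (∀ F : Set (Set X), IsCFilter (C0 G) F →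
      ∃ M : Set (Set X), IsCUltrafilter (C0 G) M ∧ F ⊆ M) ∧
    @CompactSpace (WallmanPoint (C0 G)) (wallmanTop (C0 G)) :=
  stmt_17_general G hwn hlc
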